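/- arXiv:2206.07594 — 2 statements merged into one kernel-verified Lean document; each statement's English description precedes it below -/
import Mathlib

section
/- Let β̂ be a minimizer of β ↦ Σ_{i=1}^n λ_o² H(n ŵ'_i (y_i − X̃_iᵀ β)/(λ_o √n)) + λ_s ‖β‖₁, let θ_η = (β̂ − β*) η for η ∈ (0,1), and write r_{v,i} = ŵ'_i n (y_i − X̃_iᵀ v)/(λ_o √n). Suppose that for every η ∈ (0,1), |λ_o √n Σ_{i=1}^n ŵ'_i h(r_{β*,i}) X̃_iᵀ θ_η| ≤ r_{a,2} ‖θ_η‖₂ + r_{a,1} ‖θ_η‖₁ with r_{a,1}, r_{a,2} ≥ 0, that λ_s − C_s > 0 and (λ_s + C_s)/(λ_s − C_s) ≤ 2 where C_s = r_{a,2}/√s + r_{a,1}, and that ‖θ_η‖₂ ≤ ‖θ_η‖₁/√s. Then ‖θ_{η,J^c}‖₁ ≤ ((λ_s + C_s)/(λ_s − C_s)) ‖θ_{η,J}‖₁ ≤ 2 ‖θ_{η,J}‖₁, where J is the support (index set of nonzero entries) of β* and θ_{η,J}, θ_{η,J^c} denote the restrictions of θ_η to J and its complement. -/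
open MeasureTheory ProbabilityTheory Matrix Finset Real

noncomputable section

namespace RobustSparse

/-- coordinatewise truncation at level `τ`: `x̃ⱼ = sgn(xⱼ) * min |xⱼ| τ`. -/
def trunc {d : ℕ} (τ : ℝ) (x : Fin d → ℝ) : Fin d → ℝ :=
  fun j => Real.sign (x j) * min |x j| τ

/-- derivative of the Huber loss: `h(t) = t` for `|t| ≤ 1`, `sgn(t)` otherwise. -/
def hub (t : ℝ) : ℝ := if |t| ≤ 1 then t else Real.sign t

/-- the Huber loss. -/
def Huber (t : ℝ) : ℝ := if |t| ≤ 1 then t ^ 2 / 2 else |t| - 1 / 2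

/-- ℓ1 norm of a vector. -/
def l1 {d : ℕ} (v : Fin d → ℝ) : ℝ := ∑ j, |v j|

/-- ℓ2 norm of a vector. -/
def l2 {d : ℕ} (v : Fin d → ℝ) : ℝ := Real.sqrt (∑ j, v j ^ 2)

/-- euclidean inner product. -/
def ip {d : ℕ} (a b : Fin d → ℝ) : ℝ := ∑ j, a j * b j

/-- entrywise ℓ1 norm of a matrix. -/
def mat1 {d : ℕ} (M : Matrix (Fin d) (Fin d) ℝ) : ℝ := ∑ i, ∑ j, |M i j|

/-- Frobenius inner product `⟨A,B⟩ = Tr(AᵀB)`. -/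
def minner {d : ℕ} (A B : Matrix (Fin d) (Fin d) ℝ) : ℝ := ∑ i, ∑ j, A i j * B i j

/-- the constraint set `𝔐_r = {M : Tr M ≤ r², M ⪰ 0}`. -/
def Mr (d : ℕ) (r : ℝ) : Set (Matrix (Fin d) (Fin d) ℝ) :=
  {M | M.trace ≤ r ^ 2 ∧ M.PosSemidef}

/-- ℓ2 → ℓ2 operator norm of a matrix. -/
def opNorm {d : ℕ} (M : Matrix (Fin d) (Fin d) ℝ) : ℝ :=
  ‖Matrix.toEuclideanCLM (𝕜 := ℝ) M‖

/-- the constrained probability simplex `Δ^{n-1}`. -/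
def simplex (n : ℕ) (ε : ℝ) : Set (Fin n → ℝ) :=
  {w | (∀ i, 0 ≤ w i ∧ w i ≤ 1) ∧ ∑ i, w i = 1 ∧ ∀ i, |w i| ≤ 1 / (n * (1 - ε))}

/-- an i.i.d. (independent, identically distributed, measurable) family. -/
def IsIID {Ω E : Type*} [MeasurableSpace Ω] [MeasurableSpace E]
    (μ : Measure Ω) {n : ℕ} (f : Fin n → Ω → E) : Prop :=
  (∀ i, Measurable (f i)) ∧ iIndepFun f μ ∧
    ∀ i j, Measure.map (f i) μ = Measure.map (f j) μ

/-!
The penalized objective is convex and minimized at `β̂`, so it does not increase along the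
segment from `β*` to `β̂`; at `β* + θ_η` it is therefore at most its value at `β*`. The Huber
loss lies above its tangent at `β*`, whose slope in the direction `θ_η` is the score term bounded
by hypothesis, so `λ_s (‖β* + θ_η‖₁ - ‖β*‖₁) ≤ r_{a,2} ‖θ_η‖₂ + r_{a,1} ‖θ_η‖₁ ≤ C_s ‖θ_η‖₁`.
Since `β*` vanishes off `J`, the ℓ1 norm is decomposable:
`‖β* + θ_η‖₁ - ‖β*‖₁ ≥ ‖θ_{η,J^c}‖₁ - ‖θ_{η,J}‖₁`, and the cone inequality follows by rearranging.
-/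

theorem huber_add_hub_mul_sub_le (a b : ℝ) : Huber b + hub b * (a - b) ≤ Huber a := by
  unfold Huber hub
  rcases le_or_gt |b| 1 with hb | hb
  · rw [if_pos hb, if_pos hb]
    rcases le_or_gt |a| 1 with ha | ha
    · rw [if_pos ha]; nlinarith [sq_nonneg (a - b)]
    · rw [if_neg ha.not_ge]
      have hab : a * b ≤ |a| * |b| := by rw [← abs_mul]; exact le_abs_self _
      nlinarith [sq_abs b, abs_nonneg b, mul_nonneg (sub_nonneg.mpr hb) (sub_nonneg.mpr ha.le)]
  · rw [if_neg hb.not_ge, if_neg hb.not_ge]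
    rcases lt_or_gt_of_ne (show b ≠ 0 by rintro rfl; norm_num at hb) with hneg | hpos
    · rw [Real.sign_of_neg hneg, abs_of_neg hneg]
      rcases le_or_gt |a| 1 with ha | ha
      · rw [if_pos ha]; nlinarith [sq_nonneg (a + 1)]
      · rw [if_neg ha.not_ge]; nlinarith [neg_abs_le a]
    · rw [Real.sign_of_pos hpos, abs_of_pos hpos]
      rcases le_or_gt |a| 1 with ha | ha
      · rw [if_pos ha]; nlinarith [sq_nonneg (a - 1)]
      · rw [if_neg ha.not_ge]; nlinarith [le_abs_self a]

theorem convexOn_univ_of_add_mul_sub_le {f g : ℝ → ℝ} (h : ∀ a b, f b + g b * (a - b) ≤ f a) :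
    ConvexOn ℝ Set.univ f := by
  refine ⟨convex_univ, fun x _ y _ a b ha hb hab => ?_⟩
  set m := a • x + b • y
  have hm : a * (x - m) + b * (y - m) = 0 := by
    simp only [m, smul_eq_mul]; linear_combination (-(a * x + b * y)) * hab
  calc f m = a * (f m + g m * (x - m)) + b * (f m + g m * (y - m)) := by
        linear_combination (-f m) * hab - g m * hm
    _ ≤ a • f x + b • f y := by
        rw [smul_eq_mul, smul_eq_mul]
        gcongr
        exacts [h x m, h y m]

theorem convexOn_huber : ConvexOn ℝ Set.univ Huber :=
  convexOn_univ_of_add_mul_sub_le huber_add_hub_mul_sub_le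

theorem convexOn_l1 {d : ℕ} : ConvexOn ℝ Set.univ (l1 : (Fin d → ℝ) → ℝ) := by
  refine ⟨convex_univ, fun β _ γ _ a b ha hb _ => ?_⟩
  simp only [l1, smul_eq_mul, mul_sum, ← sum_add_distrib, Pi.add_apply, Pi.smul_apply]
  refine sum_le_sum fun j _ => (abs_add_le _ _).trans_eq ?_
  rw [abs_mul, abs_mul, abs_of_nonneg ha, abs_of_nonneg hb]

theorem l1_eq_sum_filter_eq_zero_add_sum_filter_ne_zero {d : ℕ} (u θ : Fin d → ℝ) :
    l1 θ = ∑ j ∈ univ.filter fun j => u j = 0, |θ j|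
      + ∑ j ∈ univ.filter fun j => u j ≠ 0, |θ j| :=
  (sum_filter_add_sum_filter_not _ _ _).symm

theorem sum_filter_eq_zero_sub_sum_filter_ne_zero_le_l1_add_sub {d : ℕ} (u θ : Fin d → ℝ) :
    ∑ j ∈ univ.filter (fun j => u j = 0), |θ j| - ∑ j ∈ univ.filter (fun j => u j ≠ 0), |θ j|
      ≤ l1 (u + θ) - l1 u := by
  rw [l1, l1, ← sum_sub_distrib, ← sum_filter_add_sum_filter_not univ fun j => u j = 0,
    sub_eq_add_neg, ← sum_neg_distrib]
  refine add_le_add (sum_le_sum fun j hj => ?_) (sum_le_sum fun j _ => ?_)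
  · simp [(mem_filter.mp hj).2]
  · have := abs_sub_abs_le_abs_sub (u j) (u j + θ j)
    rw [sub_add_cancel_left, abs_neg] at this
    simp only [Pi.add_apply]; linarith

section HuberLoss

variable {n d : ℕ} (lamo : ℝ) (w' y : Fin n → ℝ) (Xt : Fin n → Fin d → ℝ)

def huberLoss (β : Fin d → ℝ) : ℝ :=
  ∑ i, lamo ^ 2 * Huber (n * w' i * (y i - ip (Xt i) β) / (lamo * Real.sqrt n))

theorem convexOn_huberLoss : ConvexOn ℝ Set.univ (huberLoss lamo w' y Xt) := by
  refine ⟨convex_univ, fun β _ γ _ a b ha hb hab => ?_⟩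
  simp only [huberLoss, smul_eq_mul, mul_sum, ← sum_add_distrib]
  refine sum_le_sum fun i _ => ?_
  have harg : (n : ℝ) * w' i * (y i - ip (Xt i) (a • β + b • γ)) / (lamo * Real.sqrt n)
      = a * ((n : ℝ) * w' i * (y i - ip (Xt i) β) / (lamo * Real.sqrt n))
        + b * ((n : ℝ) * w' i * (y i - ip (Xt i) γ) / (lamo * Real.sqrt n)) := by
    change _ * (y i - Xt i ⬝ᵥ (a • β + b • γ)) / _ = a * (_ * (y i - Xt i ⬝ᵥ β) / _)
      + b * (_ * (y i - Xt i ⬝ᵥ γ) / _)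
    rw [dotProduct_add, dotProduct_smul, dotProduct_smul, smul_eq_mul, smul_eq_mul]
    linear_combination (-(n * w' i * y i / (lamo * Real.sqrt n))) * hab
  rw [harg]
  calc lamo ^ 2 * Huber (a * _ + b * _)
      ≤ lamo ^ 2 * (a * Huber _ + b * Huber _) :=
        mul_le_mul_of_nonneg_left (convexOn_huber.2 trivial trivial ha hb hab) (sq_nonneg _)
    _ = _ := by ring

/-- The subtracted term is `-⟪∇ huberLoss β, θ⟫`. -/
theorem huberLoss_sub_le_huberLoss_add (β θ : Fin d → ℝ) :
    huberLoss lamo w' y Xt β - lamo * Real.sqrt n * ∑ i, w' i *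
        hub (w' i * n * (y i - ip (Xt i) β) / (lamo * Real.sqrt n)) * ip (Xt i) θ
      ≤ huberLoss lamo w' y Xt (β + θ) := by
  rw [huberLoss, huberLoss, mul_sum, ← sum_sub_distrib]
  refine sum_le_sum fun i _ => ?_
  have hip : ip (Xt i) (β + θ) = ip (Xt i) β + ip (Xt i) θ := dotProduct_add _ _ _
  have hscale : lamo ^ 2 * n / (lamo * Real.sqrt n) = lamo * Real.sqrt n := by
    rw [show lamo ^ 2 * n / (lamo * Real.sqrt n) = lamo * lamo / lamo * (n / Real.sqrt n) by ring,
      mul_self_div_self, div_sqrt]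
  rw [mul_comm (w' i) (n : ℝ)]
  set r := (n : ℝ) * w' i * (y i - ip (Xt i) β) / (lamo * Real.sqrt n)
  set r' := (n : ℝ) * w' i * (y i - ip (Xt i) (β + θ)) / (lamo * Real.sqrt n)
  have hslope :
      lamo ^ 2 * (hub r * (r' - r)) = -(lamo * Real.sqrt n * (w' i * hub r * ip (Xt i) θ)) :=
    calc lamo ^ 2 * (hub r * (r' - r))
        = -(lamo ^ 2 * n / (lamo * Real.sqrt n) * (w' i * hub r * ip (Xt i) θ)) := by
          simp only [r, r', hip]; ring
      _ = _ := by rw [hscale]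
  calc lamo ^ 2 * Huber r - lamo * Real.sqrt n * (w' i * hub r * ip (Xt i) θ)
      = lamo ^ 2 * (Huber r + hub r * (r' - r)) := by rw [mul_add, hslope]; ring
    _ ≤ lamo ^ 2 * Huber r' :=
        mul_le_mul_of_nonneg_left (huber_add_hub_mul_sub_le r' r) (sq_nonneg _)

end HuberLoss

theorem statement8_general
    {d n s : ℕ}
    (y : Fin n → ℝ) (Xt : Fin n → Fin d → ℝ)
    (w' : Fin n → ℝ)
    (βstar : Fin d → ℝ)
    (lamo lams : ℝ) (hlams : 0 < lams)
    (βhat : Fin d → ℝ)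
    (hmin : ∀ β : Fin d → ℝ,
      (∑ i, lamo ^ 2 * Huber (n * w' i * (y i - ip (Xt i) βhat) / (lamo * Real.sqrt n))
          + lams * l1 βhat)
        ≤ ∑ i, lamo ^ 2 * Huber (n * w' i * (y i - ip (Xt i) β) / (lamo * Real.sqrt n))
          + lams * l1 β)
    (ra1 ra2 : ℝ) (hra2 : 0 ≤ ra2)
    (hgrad : ∀ η : ℝ, 0 < η → η < 1 →
      |lamo * Real.sqrt n * ∑ i, w' i *
          hub (w' i * n * (y i - ip (Xt i) βstar) / (lamo * Real.sqrt n))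
          * ip (Xt i) (fun j => η * (βhat j - βstar j))|
        ≤ ra2 * l2 (fun j => η * (βhat j - βstar j))
          + ra1 * l1 (fun j => η * (βhat j - βstar j)))
    (hCs1 : 0 < lams - (ra2 / Real.sqrt s + ra1))
    (hCs2 : (lams + (ra2 / Real.sqrt s + ra1)) / (lams - (ra2 / Real.sqrt s + ra1)) ≤ 2) :
    ∀ η : ℝ, 0 < η → η < 1 →
      l2 (fun j => η * (βhat j - βstar j))
        ≤ l1 (fun j => η * (βhat j - βstar j)) / Real.sqrt s →
      (∑ j ∈ Finset.univ.filter fun j => βstar j = 0, |η * (βhat j - βstar j)|)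
          ≤ (lams + (ra2 / Real.sqrt s + ra1)) / (lams - (ra2 / Real.sqrt s + ra1))
            * ∑ j ∈ Finset.univ.filter fun j => βstar j ≠ 0, |η * (βhat j - βstar j)|
        ∧ (lams + (ra2 / Real.sqrt s + ra1)) / (lams - (ra2 / Real.sqrt s + ra1))
            * (∑ j ∈ Finset.univ.filter fun j => βstar j ≠ 0, |η * (βhat j - βstar j)|)
          ≤ 2 * ∑ j ∈ Finset.univ.filter fun j => βstar j ≠ 0, |η * (βhat j - βstar j)| := by
  intro η hη0 hη1 hl2
  set θ : Fin d → ℝ := fun j => η * (βhat j - βstar j)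
  set SJc := ∑ j ∈ univ.filter fun j => βstar j = 0, |η * (βhat j - βstar j)|
  set SJ := ∑ j ∈ univ.filter fun j => βstar j ≠ 0, |η * (βhat j - βstar j)|
  have hdescent : huberLoss lamo w' y Xt (βstar + θ) + lams * l1 (βstar + θ)
      ≤ huberLoss lamo w' y Xt βstar + lams * l1 βstar := by
    have hcomb : η • βhat + (1 - η) • βstar = βstar + θ := by
      funext j; simp only [θ, Pi.add_apply, Pi.smul_apply, smul_eq_mul]; ring
    have := ((convexOn_huberLoss lamo w' y Xt).add (convexOn_l1.smul hlams.le)).le_on_segment'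
      (x := βhat) (y := βstar) trivial trivial hη0.le (sub_nonneg.mpr hη1.le) (add_sub_cancel _ _)
    rw [hcomb] at this
    exact this.trans_eq (max_eq_right (hmin βstar))
  have htangent := huberLoss_sub_le_huberLoss_add lamo w' y Xt βstar θ
  have hdecomp : SJc - SJ ≤ l1 (βstar + θ) - l1 βstar :=
    sum_filter_eq_zero_sub_sum_filter_ne_zero_le_l1_add_sub βstar θ
  have hsplit : l1 θ = SJc + SJ := l1_eq_sum_filter_eq_zero_add_sum_filter_ne_zero βstar θ
  have hl2' : ra2 * l2 θ ≤ ra2 / Real.sqrt s * l1 θ :=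
    (mul_le_mul_of_nonneg_left hl2 hra2).trans_eq (by ring)
  have hscore : lamo * Real.sqrt n * ∑ i, w' i *
      hub (w' i * n * (y i - ip (Xt i) βstar) / (lamo * Real.sqrt n)) * ip (Xt i) θ
      ≤ ra2 * l2 θ + ra1 * l1 θ :=
    (le_abs_self _).trans (hgrad η hη0 hη1)
  have hcone : lams * (SJc - SJ) ≤ (ra2 / Real.sqrt s + ra1) * (SJc + SJ) := by
    rw [hsplit] at hl2' hscore
    linarith [mul_le_mul_of_nonneg_left hdecomp hlams.le]
  have hSJ : 0 ≤ SJ := sum_nonneg fun j _ => abs_nonneg _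
  refine ⟨?_, mul_le_mul_of_nonneg_right hCs2 hSJ⟩
  rw [div_mul_eq_mul_div, le_div_iff₀ hCs1]
  linarith

/-- Proposition: cone condition for the penalized Huber estimator. -/
theorem statement8
    {d n s : ℕ} (hn : 0 < n)
    (y : Fin n → ℝ) (Xt : Fin n → Fin d → ℝ)
    (w' : Fin n → ℝ) (hw' : ∀ i, w' i = 0 ∨ w' i = 1 / n)
    (βstar : Fin d → ℝ) (hs : (Finset.univ.filter fun j => βstar j ≠ 0).card = s)
    (lamo lams : ℝ) (hlamo : 0 < lamo) (hlams : 0 < lams)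
    (βhat : Fin d → ℝ)
    (hmin : ∀ β : Fin d → ℝ,
      (∑ i, lamo ^ 2 * Huber (n * w' i * (y i - ip (Xt i) βhat) / (lamo * Real.sqrt n))
          + lams * l1 βhat)
        ≤ ∑ i, lamo ^ 2 * Huber (n * w' i * (y i - ip (Xt i) β) / (lamo * Real.sqrt n))
          + lams * l1 β)
    (ra1 ra2 : ℝ) (hra1 : 0 ≤ ra1) (hra2 : 0 ≤ ra2)
    (hgrad : ∀ η : ℝ, 0 < η → η < 1 →
      |lamo * Real.sqrt n * ∑ i, w' i *
          hub (w' i * n * (y i - ip (Xt i) βstar) / (lamo * Real.sqrt n))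
          * ip (Xt i) (fun j => η * (βhat j - βstar j))|
        ≤ ra2 * l2 (fun j => η * (βhat j - βstar j))
          + ra1 * l1 (fun j => η * (βhat j - βstar j)))
    (hCs1 : 0 < lams - (ra2 / Real.sqrt s + ra1))
    (hCs2 : (lams + (ra2 / Real.sqrt s + ra1)) / (lams - (ra2 / Real.sqrt s + ra1)) ≤ 2) :
    ∀ η : ℝ, 0 < η → η < 1 →
      l2 (fun j => η * (βhat j - βstar j))
        ≤ l1 (fun j => η * (βhat j - βstar j)) / Real.sqrt s →
      (∑ j ∈ Finset.univ.filter fun j => βstar j = 0, |η * (βhat j - βstar j)|)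
          ≤ (lams + (ra2 / Real.sqrt s + ra1)) / (lams - (ra2 / Real.sqrt s + ra1))
            * ∑ j ∈ Finset.univ.filter fun j => βstar j ≠ 0, |η * (βhat j - βstar j)|
        ∧ (lams + (ra2 / Real.sqrt s + ra1)) / (lams - (ra2 / Real.sqrt s + ra1))
            * (∑ j ∈ Finset.univ.filter fun j => βstar j ≠ 0, |η * (βhat j - βstar j)|)
          ≤ 2 * ∑ j ∈ Finset.univ.filter fun j => βstar j ≠ 0, |η * (βhat j - βstar j)| :=
  statement8_general y Xt w' βstar lamo lams hlams βhat hmin ra1 ra2 hra2 hgrad hCs1 hCs2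

end RobustSparse
end
end

section
/- Let x be a random vector in ℝ^d with E[(x_{j₁} x_{j₂} x_{j₃} x_{j₄})²] ≤ σ_{x,8}^8 for all coordinates 1 ≤ j₁, j₂, j₃, j₄ ≤ d, and let x̃ be its coordinatewise truncation at level τ_x > 0. Then for all 1 ≤ j₁, j₂ ≤ d, E[(x_{j₁} − x̃_{j₁})(x_{j₂} − x̃_{j₂})] ≤ σ_{x,8}^8 / τ_x^6, and consequently for every β ∈ ℝ^d, √(E[((x̃ − x)ᵀ β)²]) ≤ ‖β‖₁ σ_{x,8}^4 / τ_x³. -/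
open MeasureTheory ProbabilityTheory Matrix Finset Real

noncomputable section

namespace RobustSparse

/-!
The truncation error `x - x̃` vanishes where `|x| ≤ τ` and is `|x| - τ ≤ |x| ^ 4 / τ ^ 3`
elsewhere, so `|(x_j - x̃_j)(x_k - x̃_k)| ≤ (x_j x_j x_k x_k) ^ 2 / τ ^ 6`, whose mean is at most
`σ ^ 8 / τ ^ 6` by the eighth-moment hypothesis. Expanding `((x̃ - x)ᵀ β) ^ 2` as a double sum over
coordinates bounds its mean by `‖β‖₁ ^ 2 σ ^ 8 / τ ^ 6`.
-/

/-- The truncation error `x j - trunc τ x j`, as a function of `x j`. -/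
def truncErr (τ t : ℝ) : ℝ := t - Real.sign t * min |t| τ

theorem _root_.Real.measurable_sign : Measurable Real.sign :=
  Measurable.ite (measurableSet_lt measurable_id measurable_const) measurable_const
    (Measurable.ite (measurableSet_lt measurable_const measurable_id) measurable_const
      measurable_const)

theorem _root_.Real.sign_mul_abs (t : ℝ) : Real.sign t * |t| = t := by
  rcases lt_trichotomy t 0 with ht | rfl | ht
  · rw [Real.sign_of_neg ht, abs_of_neg ht]; ring
  · simp
  · rw [Real.sign_of_pos ht, abs_of_pos ht]; ring

theorem measurable_truncErr (τ : ℝ) : Measurable (truncErr τ) :=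
  measurable_id.sub (Real.measurable_sign.mul (measurable_id.abs.min measurable_const))

theorem truncErr_of_abs_le {τ t : ℝ} (ht : |t| ≤ τ) : truncErr τ t = 0 := by
  rw [truncErr, min_eq_left ht, Real.sign_mul_abs, sub_self]

theorem abs_truncErr_of_lt_abs {τ t : ℝ} (hτ : 0 ≤ τ) (ht : τ < |t|) :
    |truncErr τ t| = |t| - τ := by
  have ht0 : t ≠ 0 := by rintro rfl; simp at ht; linarith
  have hsign : |Real.sign t| = 1 := by
    rcases Real.sign_apply_eq_of_ne_zero t ht0 with h | h <;> simp [h]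
  have hfactor : truncErr τ t = Real.sign t * (|t| - τ) := by
    rw [truncErr, min_eq_right ht.le, mul_sub, Real.sign_mul_abs]
  rw [hfactor, abs_mul, hsign, one_mul, abs_of_pos (sub_pos.mpr ht)]

theorem abs_truncErr_le_pow {τ : ℝ} (hτ : 0 < τ) (t : ℝ) (n : ℕ) :
    |truncErr τ t| ≤ |t| ^ (n + 1) / τ ^ n := by
  rcases le_or_gt |t| τ with ht | ht
  · rw [truncErr_of_abs_le ht, abs_zero]
    positivity
  · have hratio : 1 ≤ (|t| / τ) ^ n := one_le_pow₀ ((one_le_div hτ).mpr ht.le)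
    calc |truncErr τ t| = |t| - τ := abs_truncErr_of_lt_abs hτ.le ht
      _ ≤ |t| * 1 := by linarith
      _ ≤ |t| * (|t| / τ) ^ n := mul_le_mul_of_nonneg_left hratio (abs_nonneg t)
      _ = |t| ^ (n + 1) / τ ^ n := by rw [div_pow, pow_succ']; ring

theorem abs_truncErr_mul_le {τ : ℝ} (hτ : 0 < τ) (s t : ℝ) :
    |truncErr τ s * truncErr τ t| ≤ (s * s * t * t) ^ 2 / τ ^ 6 := by
  calc |truncErr τ s * truncErr τ t| = |truncErr τ s| * |truncErr τ t| := abs_mul _ _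
    _ ≤ (|s| ^ 4 / τ ^ 3) * (|t| ^ 4 / τ ^ 3) :=
      mul_le_mul (abs_truncErr_le_pow hτ s 3) (abs_truncErr_le_pow hτ t 3) (abs_nonneg _)
        (by positivity)
    _ = (s * s * t * t) ^ 2 / τ ^ 6 := by
      rw [(by decide : Even 4).pow_abs, (by decide : Even 4).pow_abs]
      ring

section Moments

variable {Ω : Type*} [MeasurableSpace Ω] {μ : Measure Ω} {f g : Ω → ℝ}

theorem integrable_sq_mul_mul_mul (hf : MemLp f 8 μ) (hg : MemLp g 8 μ) :
    Integrable (fun ω => (f ω * f ω * g ω * g ω) ^ 2) μ := by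
  refine Integrable.mono'
    (((hf.integrable_norm_pow (by norm_num)).add (hg.integrable_norm_pow (by norm_num))).div_const 2)
    ((((hf.1.mul hf.1).mul hg.1).mul hg.1).pow 2) (ae_of_all _ fun ω => ?_)
  simp only [norm_pow, norm_mul, Pi.add_apply]
  nlinarith [sq_nonneg (‖f ω‖ ^ 4 - ‖g ω‖ ^ 4)]

theorem integrable_truncErr_mul (hf : MemLp f 8 μ) (hg : MemLp g 8 μ) {τ : ℝ} (hτ : 0 < τ) :
    Integrable (fun ω => truncErr τ (f ω) * truncErr τ (g ω)) μ :=
  Integrable.mono' ((integrable_sq_mul_mul_mul hf hg).div_const (τ ^ 6))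
    (((measurable_truncErr τ).comp_aemeasurable hf.1.aemeasurable).mul
      ((measurable_truncErr τ).comp_aemeasurable hg.1.aemeasurable)).aestronglyMeasurable
    (ae_of_all _ fun ω => abs_truncErr_mul_le hτ (f ω) (g ω))

theorem abs_integral_truncErr_mul_le (hf : MemLp f 8 μ) (hg : MemLp g 8 μ) {τ C : ℝ}
    (hτ : 0 < τ) (hC : ∫ ω, (f ω * f ω * g ω * g ω) ^ 2 ∂μ ≤ C) :
    |∫ ω, truncErr τ (f ω) * truncErr τ (g ω) ∂μ| ≤ C / τ ^ 6 :=
  calc |∫ ω, truncErr τ (f ω) * truncErr τ (g ω) ∂μ|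
      ≤ ∫ ω, |truncErr τ (f ω) * truncErr τ (g ω)| ∂μ := abs_integral_le_integral_abs
    _ ≤ ∫ ω, (f ω * f ω * g ω * g ω) ^ 2 / τ ^ 6 ∂μ :=
      integral_mono (integrable_truncErr_mul hf hg hτ).abs
        ((integrable_sq_mul_mul_mul hf hg).div_const _)
        fun ω => abs_truncErr_mul_le hτ (f ω) (g ω)
    _ = (∫ ω, (f ω * f ω * g ω * g ω) ^ 2 ∂μ) / τ ^ 6 := integral_div _ _
    _ ≤ C / τ ^ 6 := by gcongr

theorem integral_sq_sum_le_of_abs_integral_mul_le {ι : Type*} [Fintype ι] (e : ι → Ω → ℝ)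
    (β : ι → ℝ) {C : ℝ} (hint : ∀ j k, Integrable (fun ω => e j ω * e k ω) μ)
    (hC : ∀ j k, |∫ ω, e j ω * e k ω ∂μ| ≤ C) :
    ∫ ω, (∑ j, β j * e j ω) ^ 2 ∂μ ≤ (∑ j, |β j|) ^ 2 * C := by
  have hexpand : ∀ ω, (∑ j, β j * e j ω) ^ 2 = ∑ j, ∑ k, β j * β k * (e j ω * e k ω) := by
    intro ω
    rw [sq, Finset.sum_mul_sum]
    exact Finset.sum_congr rfl fun j _ => Finset.sum_congr rfl fun k _ => by ring
  have hterm : ∀ j k, β j * β k * ∫ ω, e j ω * e k ω ∂μ ≤ |β j| * |β k| * C := fun j k =>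
    calc β j * β k * ∫ ω, e j ω * e k ω ∂μ ≤ |β j * β k * ∫ ω, e j ω * e k ω ∂μ| := le_abs_self _
      _ = |β j| * |β k| * |∫ ω, e j ω * e k ω ∂μ| := by rw [abs_mul, abs_mul]
      _ ≤ |β j| * |β k| * C := by gcongr; exact hC j k
  calc ∫ ω, (∑ j, β j * e j ω) ^ 2 ∂μ
      = ∑ j, ∑ k, β j * β k * ∫ ω, e j ω * e k ω ∂μ := by
        simp only [hexpand]
        rw [integral_finsetSum _ fun j _ => integrable_finsetSum _ fun k _ =>
          (hint j k).const_mul _]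
        refine Finset.sum_congr rfl fun j _ => ?_
        rw [integral_finsetSum _ fun k _ => (hint j k).const_mul _]
        simp only [integral_const_mul]
    _ ≤ ∑ j, ∑ k, |β j| * |β k| * C :=
        Finset.sum_le_sum fun j _ => Finset.sum_le_sum fun k _ => hterm j k
    _ = (∑ j, |β j|) ^ 2 * C := by
        rw [sq, Finset.sum_mul_sum, Finset.sum_mul]
        simp only [Finset.sum_mul]

end Moments

theorem statement14_general
    {Ω : Type*} [MeasurableSpace Ω] (μ : Measure Ω)
    {d : ℕ} (x : Ω → Fin d → ℝ)
    (hmem : ∀ j, MemLp (fun ω => x ω j) 8 μ)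
    (σ8 : ℝ)
    (h8 : ∀ j1 j2 j3 j4 : Fin d,
      ∫ ω, (x ω j1 * x ω j2 * x ω j3 * x ω j4) ^ 2 ∂μ ≤ σ8 ^ 8)
    (τ : ℝ) (hτ : 0 < τ) :
    (∀ j1 j2 : Fin d,
        ∫ ω, (x ω j1 - trunc τ (x ω) j1) * (x ω j2 - trunc τ (x ω) j2) ∂μ
          ≤ σ8 ^ 8 / τ ^ 6)
      ∧ ∀ β : Fin d → ℝ,
        Real.sqrt (∫ ω, ip (fun j => trunc τ (x ω) j - x ω j) β ^ 2 ∂μ)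
          ≤ l1 β * σ8 ^ 4 / τ ^ 3 := by
  have hcov : ∀ j k, |∫ ω, truncErr τ (x ω j) * truncErr τ (x ω k) ∂μ| ≤ σ8 ^ 8 / τ ^ 6 :=
    fun j k => abs_integral_truncErr_mul_le (hmem j) (hmem k) hτ (h8 j j k k)
  refine ⟨fun j k => (le_abs_self _).trans (hcov j k), fun β => ?_⟩
  have hip : ∀ ω, ip (fun j => trunc τ (x ω) j - x ω j) β ^ 2
      = (∑ j, β j * truncErr τ (x ω j)) ^ 2 := by
    intro ω
    rw [← neg_sq, ip, ← Finset.sum_neg_distrib]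
    simp only [trunc, truncErr]
    congr 1
    exact Finset.sum_congr rfl fun j _ => by ring
  have hsq : ∫ ω, ip (fun j => trunc τ (x ω) j - x ω j) β ^ 2 ∂μ ≤ l1 β ^ 2 * (σ8 ^ 8 / τ ^ 6) := by
    simp only [hip]
    exact integral_sq_sum_le_of_abs_integral_mul_le (fun j ω => truncErr τ (x ω j)) β
      (fun j k => integrable_truncErr_mul (hmem j) (hmem k) hτ) hcov
  have hl1 : 0 ≤ l1 β := Finset.sum_nonneg fun j _ => abs_nonneg (β j)
  exact Real.sqrt_le_iff.mpr ⟨by positivity, hsq.trans_eq (by ring)⟩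

/-- second moments of the truncation error. -/
theorem statement14
    {Ω : Type*} [MeasurableSpace Ω] (μ : Measure Ω) [IsProbabilityMeasure μ]
    {d : ℕ} (x : Ω → Fin d → ℝ) (hx : Measurable x)
    (hmem : ∀ j, MemLp (fun ω => x ω j) 8 μ)
    (σ8 : ℝ) (hσ8 : 0 ≤ σ8)
    (h8 : ∀ j1 j2 j3 j4 : Fin d,
      ∫ ω, (x ω j1 * x ω j2 * x ω j3 * x ω j4) ^ 2 ∂μ ≤ σ8 ^ 8)
    (τ : ℝ) (hτ : 0 < τ) :
    (∀ j1 j2 : Fin d,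
        ∫ ω, (x ω j1 - trunc τ (x ω) j1) * (x ω j2 - trunc τ (x ω) j2) ∂μ
          ≤ σ8 ^ 8 / τ ^ 6)
      ∧ ∀ β : Fin d → ℝ,
        Real.sqrt (∫ ω, ip (fun j => trunc τ (x ω) j - x ω j) β ^ 2 ∂μ)
          ≤ l1 β * σ8 ^ 4 / τ ^ 3 :=
  statement14_general μ x hmem σ8 h8 τ hτ

end RobustSparse
end
end
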